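/- Let G = (L, Σ, δ, O) be a POMDP, T ⊆ L, and l ∈ L. Suppose that no state l' reachable from l in the underlying graph of G (including l itself) admits an observation-based strategy that is almost-sure winning for Safe(T) from l'. Then for every observation-based strategy α, Pr_l^α(Büchi(L ∖ T)) = 1, i.e., with probability 1 the play visits states outside T infinitely often. -/

import Mathlib

open scoped ENNReal

/-- A partially-observable Markov decision process (POMDP) with states `L`,
actions `A` and observations `O`: a probabilistic transition function and an
observation function (the observations partition the state space). -/
structure POMDP (L : Type) (A : Type) (O : Type) where
  δ : L → A → PMF L
  obs : L → O

namespace POMDP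

variable {L A O : Type}

/-- A (randomized) strategy: given the initial state and the history of
(action, state) steps played so far, it chooses a distribution on actions. -/
abbrev Strategy (L A : Type) := L → List (A × L) → PMF A

/-- The sequence of states visited along a finite prefix. -/
def statesOf (l : L) (h : List (A × L)) : List L := l :: h.map Prod.snd

/-- Auxiliary probability of a finite prefix, for a strategy `π` given as a
function of the remaining history. -/
noncomputable def prefProbAux (M : POMDP L A O) :
    (List (A × L) → PMF A) → L → List (A × L) → ℝ≥0∞
  | _, _, [] => 1
  | π, l, (a, l') :: h =>
      π [] a * M.δ l a l' * M.prefProbAux (fun h' => π ((a, l') :: h')) l' h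

/-- The probability, under strategy `α` from state `l`, that the play starts
with the finite prefix `h` of (action, state) steps. -/
noncomputable def prefProb (M : POMDP L A O) (α : Strategy L A) (l : L)
    (h : List (A × L)) : ℝ≥0∞ :=
  M.prefProbAux (α l) l h

/-- A prefix is consistent with `α` from `l` if it has positive probability. -/
def Consistent (M : POMDP L A O) (α : Strategy L A) (l : L) (h : List (A × L)) : Prop :=
  0 < M.prefProb α l h

/-- The probability, under strategy `α` from state `l`, that the length-`n`
prefix of the play satisfies the predicate `P`. -/
noncomputable def horizonProb (M : POMDP L A O) [Fintype L] [Fintype A]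
    (α : Strategy L A) (l : L) (n : ℕ) (P : List (A × L) → Prop) : ℝ≥0∞ :=
  ∑ f : Fin n → A × L,
    Set.indicator {g : Fin n → A × L | P (List.ofFn g)}
      (fun g => M.prefProb α l (List.ofFn g)) f

/-- `Pr_l^α(Reach(T))`: probability that the play visits a state of `T`
(as the increasing limit of the finite-horizon reachability probabilities). -/
noncomputable def reachProb (M : POMDP L A O) [Fintype L] [Fintype A]
    (α : Strategy L A) (l : L) (T : Set L) : ℝ≥0∞ :=
  ⨆ n, M.horizonProb α l n (fun h => ∃ s ∈ statesOf l h, s ∈ T)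

/-- `Pr_l^α(Safe(T))`: probability that all states of the play lie in `T`
(as the decreasing limit of the finite-horizon safety probabilities). -/
noncomputable def safeProb (M : POMDP L A O) [Fintype L] [Fintype A]
    (α : Strategy L A) (l : L) (T : Set L) : ℝ≥0∞ :=
  ⨅ n, M.horizonProb α l n (fun h => ∀ s ∈ statesOf l h, s ∈ T)

/-- `Pr_l^α(Until(T₁,T₂))`: probability that the play visits `T₂` at some
position `k` with all positions `≤ k` in `T₁`. -/
noncomputable def untilProb (M : POMDP L A O) [Fintype L] [Fintype A]
    (α : Strategy L A) (l : L) (T₁ T₂ : Set L) : ℝ≥0∞ :=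
  ⨆ n, M.horizonProb α l n (fun h => ∃ k, ∃ hk : k < (statesOf l h).length,
      (statesOf l h).get ⟨k, hk⟩ ∈ T₂ ∧
      ∀ j, ∀ hj : j < (statesOf l h).length, j ≤ k → (statesOf l h).get ⟨j, hj⟩ ∈ T₁)

/-- `Pr_l^α(coBüchi(T))`: probability that from some point on all states of
the play lie in `T`. -/
noncomputable def coBuchiProb (M : POMDP L A O) [Fintype L] [Fintype A]
    (α : Strategy L A) (l : L) (T : Set L) : ℝ≥0∞ :=
  ⨆ k, ⨅ n, M.horizonProb α l n (fun h =>
    ∀ j, ∀ hj : j < (statesOf l h).length, k ≤ j → (statesOf l h).get ⟨j, hj⟩ ∈ T)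

/-- `Pr_l^α(Büchi(T))`: probability that the play visits `T` infinitely often. -/
noncomputable def buchiProb (M : POMDP L A O) [Fintype L] [Fintype A]
    (α : Strategy L A) (l : L) (T : Set L) : ℝ≥0∞ :=
  ⨅ k, ⨆ n, M.horizonProb α l n (fun h =>
    ∃ j, ∃ hj : j < (statesOf l h).length, k ≤ j ∧ (statesOf l h).get ⟨j, hj⟩ ∈ T)

/-- A strategy is observation-based if it plays the same distribution after any
two prefixes with the same sequences of observations and of actions. -/
def ObservationBased (M : POMDP L A O) (α : Strategy L A) : Prop :=
  ∀ l l' (h h' : List (A × L)), M.obs l = M.obs l' →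
    h.map Prod.fst = h'.map Prod.fst →
    h.map (fun p => M.obs p.2) = h'.map (fun p => M.obs p.2) →
    α l h = α l' h'

/-- A strategy is pure if it always plays a Dirac distribution. -/
def PureStrategy (α : Strategy L A) : Prop := ∀ l h, ∃ a, α l h = PMF.pure a

/-- Edge of the underlying graph of the POMDP. -/
def Edge (M : POMDP L A O) (l l' : L) : Prop := ∃ a, 0 < M.δ l a l'

/-- Reachability in the underlying graph of the POMDP. -/
def ReachableFrom (M : POMDP L A O) (l l' : L) : Prop :=
  Relation.ReflTransGen M.Edge l l'

/-- The memory state reached by a memory-update function `u` (together with the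
current state) after running through a prefix. -/
def memRun (M : POMDP L A O) {Mem : Type} (u : Mem → O → A → Mem) :
    Mem → L → List (A × L) → Mem × L
  | m, l, [] => (m, l)
  | m, l, (a, l') :: h => M.memRun u (u m (M.obs l) a) l' h

/-- The (observation-based) strategy induced by a finite-memory machine given by
memory-update function `u`, next-action function `next` and initial memory `m0`. -/
def fmStrategy (M : POMDP L A O) {Mem : Type} (u : Mem → O → A → Mem)
    (next : Mem → O → PMF A) (m0 : Mem) : Strategy L A :=
  fun l h =>
    let p := M.memRun u m0 l h
    next p.1 (M.obs p.2)

/-- The distribution choosing `x` and `y` with probability 1/2 each. -/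
noncomputable def half (x y : L) : PMF L :=
  (PMF.uniformOfFintype Bool).map (fun b => if b then x else y)

end POMDP

/-!
Play the perfect-information game whose positions are beliefs (sets of states compatible with
the observations so far). A belief from which the controller can keep the belief inside `T`
forever yields a finite-memory, observation-based strategy that is surely safe; so by hypothesis
every reachable singleton belief is losing, and, `L` being finite, all of them lose within a
common horizon `N`. Unwinding a losing belief against an observation-based strategy shows that it
leaves `T` within `N` steps with probability at least `p ^ N`, `p` the least positive transition
probability, from every reachable state. By the Markov property, staying in `T` for `m * N` steps
after any position then has probability at most `(1 - p ^ N) ^ m → 0`, so `Tᶜ` is visited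
infinitely often almost surely.
-/

open Finset Filter

theorem PMF.sum_coe_eq_one {α : Type*} [Fintype α] (p : PMF α) : ∑ a, p a = 1 := by
  rw [← tsum_fintype (L := .unconditional _)]
  exact p.tsum_coe

namespace POMDP

variable {L A O : Type}

/-- The observation-based condition for a strategy whose initial state has been fixed. -/
def ObsInvariant (M : POMDP L A O) (π : List (A × L) → PMF A) : Prop :=
  ∀ h h' : List (A × L), h.map Prod.fst = h'.map Prod.fst →
    h.map (fun p => M.obs p.2) = h'.map (fun p => M.obs p.2) → π h = π h'

theorem ObservationBased.obsInvariant {M : POMDP L A O} {α : Strategy L A}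
    (hα : M.ObservationBased α) (l : L) : M.ObsInvariant (α l) :=
  fun h h' => hα l l h h' rfl

namespace ObsInvariant

variable {M : POMDP L A O} {π : List (A × L) → PMF A}

theorem cons (hπ : M.ObsInvariant π) (p : A × L) : M.ObsInvariant fun t => π (p :: t) :=
  fun h h' h₁ h₂ => hπ _ _ (by simp [h₁]) (by simp [h₂])

theorem cons_eq_cons (hπ : M.ObsInvariant π) (a : A) {y y' : L} (h : M.obs y = M.obs y') :
    (fun t => π ((a, y) :: t)) = fun t => π ((a, y') :: t) :=
  funext fun _ => hπ _ _ rfl (by simp [h])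

end ObsInvariant

section PrefixProb

variable [Fintype L] [Fintype A] (M : POMDP L A O)

theorem sum_sum_mul_δ (ν : PMF A) (x : L) : ∑ a, ∑ y, ν a * M.δ x a y = 1 := by
  simp only [← mul_sum, PMF.sum_coe_eq_one, mul_one]

open Classical in
noncomputable def prefixProb (π : List (A × L) → PMF A) (x : L) (n : ℕ)
    (P : List (A × L) → Prop) : ℝ≥0∞ :=
  ∑ f : Fin n → A × L, if P (List.ofFn f) then M.prefProbAux π x (List.ofFn f) else 0

variable {M}

theorem horizonProb_eq_prefixProb (α : Strategy L A) (l : L) (n : ℕ)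
    (P : List (A × L) → Prop) : M.horizonProb α l n P = M.prefixProb (α l) l n P := by
  classical
  refine sum_congr rfl fun f _ => ?_
  rw [Set.indicator_apply]
  rfl

open Classical in
theorem prefixProb_congr {π x n} {P Q : List (A × L) → Prop}
    (h : ∀ t : List (A × L), t.length = n → (P t ↔ Q t)) :
    M.prefixProb π x n P = M.prefixProb π x n Q :=
  sum_congr rfl fun _ _ => if_congr (h _ List.length_ofFn) rfl rfl

theorem prefixProb_mono {π x n} {P Q : List (A × L) → Prop} (h : ∀ t, P t → Q t) :
    M.prefixProb π x n P ≤ M.prefixProb π x n Q :=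
  sum_le_sum fun f _ => by
    split_ifs with hP hQ
    exacts [le_rfl, absurd (h _ hP) hQ, zero_le, le_rfl]

theorem prefixProb_false {π x n} : M.prefixProb π x n (fun _ => False) = 0 := by
  simp [prefixProb]

open Classical in
theorem prefixProb_zero {π x} {P : List (A × L) → Prop} :
    M.prefixProb π x 0 P = if P [] then 1 else 0 := by
  simp [prefixProb, List.ofFn_zero, prefProbAux]

open Classical in
theorem prefixProb_succ {π x n} {P : List (A × L) → Prop} :
    M.prefixProb π x (n + 1) P = ∑ a, ∑ y, π [] a * M.δ x a y *
      M.prefixProb (fun t => π ((a, y) :: t)) y n (fun t => P ((a, y) :: t)) := by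
  rw [prefixProb, ← (Fin.consEquiv fun _ => A × L).sum_comp, Fintype.sum_prod_type,
    Fintype.sum_prod_type]
  refine sum_congr rfl fun a _ => sum_congr rfl fun y _ => ?_
  rw [prefixProb, mul_sum]
  refine sum_congr rfl fun g _ => ?_
  rw [show (Fin.consEquiv fun _ => A × L) ((a, y), g) = Fin.cons (a, y) g from rfl,
    List.ofFn_cons, prefProbAux, mul_ite, mul_zero]

theorem prefixProb_true {π x} : ∀ {n}, M.prefixProb π x n (fun _ => True) = 1
  | 0 => by simp [prefixProb_zero]
  | n + 1 => by simp only [prefixProb_succ, prefixProb_true, mul_one, sum_sum_mul_δ]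

theorem prefixProb_add_prefixProb_not {π x n} (P : List (A × L) → Prop) :
    M.prefixProb π x n P + M.prefixProb π x n (fun t => ¬ P t) = 1 := by
  classical
  rw [← prefixProb_true (M := M) (π := π) (x := x) (n := n), prefixProb, prefixProb, prefixProb,
    ← sum_add_distrib]
  refine sum_congr rfl fun f _ => ?_
  by_cases hP : P (List.ofFn f) <;> simp [hP]

theorem prefixProb_le_one {π x n} {P : List (A × L) → Prop} : M.prefixProb π x n P ≤ 1 :=
  prefixProb_true (M := M) ▸ prefixProb_mono fun _ _ => trivial

theorem prefixProb_eq_one {π x n} {P : List (A × L) → Prop}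
    (h : ∀ t, M.prefProbAux π x t ≠ 0 → P t) : M.prefixProb π x n P = 1 := by
  rw [← prefixProb_true (M := M) (π := π) (x := x) (n := n)]
  refine sum_congr rfl fun f _ => ?_
  by_cases hf : M.prefProbAux π x (List.ofFn f) = 0
  · simp [hf]
  · simp [h _ hf]

end PrefixProb

theorem statesOf_cons (x : L) (a : A) (y : L) (h : List (A × L)) :
    statesOf x ((a, y) :: h) = x :: statesOf y h := rfl

def Closed (M : POMDP L A O) (R : L → Prop) : Prop :=
  ∀ x a y, R x → M.δ x a y ≠ 0 → R y

theorem closed_reachableFrom (M : POMDP L A O) (l : L) : M.Closed (M.ReachableFrom l) :=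
  fun _ a _ hx hy => hx.tail ⟨a, pos_iff_ne_zero.mpr hy⟩

section Safety

variable [Fintype L] [Fintype A] (M : POMDP L A O) (T : Set L)

noncomputable def stayProb (π : List (A × L) → PMF A) (x : L) (n : ℕ) : ℝ≥0∞ :=
  M.prefixProb π x n fun h => ∀ s ∈ statesOf x h, s ∈ T

noncomputable def leaveProb (π : List (A × L) → PMF A) (x : L) (n : ℕ) : ℝ≥0∞ :=
  M.prefixProb π x n fun h => ¬ ∀ s ∈ statesOf x h, s ∈ T

variable {M T} {π : List (A × L) → PMF A} {x : L} {n : ℕ}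

theorem stayProb_add_leaveProb : M.stayProb T π x n + M.leaveProb T π x n = 1 :=
  prefixProb_add_prefixProb_not _

theorem stayProb_le_one : M.stayProb T π x n ≤ 1 := prefixProb_le_one

theorem stayProb_of_notMem (hx : x ∉ T) : M.stayProb T π x n = 0 := by
  rw [stayProb, prefixProb_congr (Q := fun _ => False) fun _ _ => ?_, prefixProb_false]
  exact iff_false_intro fun h => hx (h x List.mem_cons_self)

theorem leaveProb_of_notMem (hx : x ∉ T) : M.leaveProb T π x n = 1 := by
  rw [leaveProb, prefixProb_congr (Q := fun _ => True) fun _ _ => ?_, prefixProb_true]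
  exact iff_true_intro fun h => hx (h x List.mem_cons_self)

theorem stayProb_zero_of_mem (hx : x ∈ T) : M.stayProb T π x 0 = 1 := by
  simp [stayProb, prefixProb_zero, statesOf, hx]

theorem stayProb_succ_of_mem (hx : x ∈ T) :
    M.stayProb T π x (n + 1) =
      ∑ a, ∑ y, π [] a * M.δ x a y * M.stayProb T (fun t => π ((a, y) :: t)) y n := by
  simp only [stayProb, prefixProb_succ, statesOf_cons, List.forall_mem_cons, hx, true_and]

theorem leaveProb_succ_of_mem (hx : x ∈ T) :
    M.leaveProb T π x (n + 1) =
      ∑ a, ∑ y, π [] a * M.δ x a y * M.leaveProb T (fun t => π ((a, y) :: t)) y n := by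
  simp only [leaveProb, prefixProb_succ, statesOf_cons, List.forall_mem_cons, hx, true_and]

variable {R : L → Prop} {r : ℕ} {B : ℝ≥0∞}

theorem stayProb_add_le_mul (hR : M.Closed R)
    (H : ∀ π y, M.ObsInvariant π → R y → M.stayProb T π y r ≤ B) :
    ∀ (c : ℕ) {π x}, M.ObsInvariant π → R x →
      M.stayProb T π x (c + r) ≤ M.stayProb T π x c * B
  | 0, π, x, hπ, hx => by
    by_cases h : x ∈ T
    · simpa [stayProb_zero_of_mem h] using H π x hπ hx
    · simp [stayProb_of_notMem h]
  | c + 1, π, x, hπ, hx => by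
    by_cases h : x ∈ T
    · rw [Nat.add_right_comm, stayProb_succ_of_mem h, stayProb_succ_of_mem h, sum_mul]
      refine sum_le_sum fun a _ => ?_
      rw [sum_mul]
      refine sum_le_sum fun y _ => ?_
      by_cases hz : M.δ x a y = 0
      · simp [hz]
      · rw [mul_assoc (π [] a * M.δ x a y)]
        exact mul_le_mul_right (stayProb_add_le_mul hR H c (hπ.cons _) (hR x a y hx hz)) _
    · simp [stayProb_of_notMem h]

theorem stayProb_mul_le_pow (hR : M.Closed R)
    (H : ∀ π y, M.ObsInvariant π → R y → M.stayProb T π y r ≤ B) :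
    ∀ (m : ℕ) {π x}, M.ObsInvariant π → R x → M.stayProb T π x (m * r) ≤ B ^ m
  | 0, _, _, _, _ => by simpa using stayProb_le_one
  | m + 1, π, x, hπ, hx =>
    calc M.stayProb T π x ((m + 1) * r) = M.stayProb T π x (m * r + r) := by rw [Nat.succ_mul]
      _ ≤ M.stayProb T π x (m * r) * B := stayProb_add_le_mul hR H _ hπ hx
      _ ≤ B ^ m * B := mul_le_mul_left (stayProb_mul_le_pow hR H m hπ hx) _
      _ = B ^ (m + 1) := (pow_succ _ _).symm

theorem prefixProb_forall_mem_drop_le (hR : M.Closed R)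
    (H : ∀ π y, M.ObsInvariant π → R y → M.stayProb T π y r ≤ B) :
    ∀ (k : ℕ) {π x}, M.ObsInvariant π → R x →
      M.prefixProb π x (k + r) (fun h => ∀ s ∈ (statesOf x h).drop k, s ∈ T) ≤ B
  | 0, π, x, hπ, hx => by simpa [stayProb] using H π x hπ hx
  | k + 1, π, x, hπ, hx => by
    rw [Nat.add_right_comm, prefixProb_succ]
    calc _ ≤ ∑ a, ∑ y, π [] a * M.δ x a y * B := by
          refine sum_le_sum fun a _ => sum_le_sum fun y _ => ?_
          by_cases hz : M.δ x a y = 0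
          · simp [hz]
          · exact mul_le_mul_right
              (prefixProb_forall_mem_drop_le hR H k (hπ.cons _) (hR x a y hx hz)) _
      _ = B := by simp only [← sum_mul, sum_sum_mul_δ, one_mul]

end Safety

theorem buchiProb_compl_eq_one [Fintype L] [Fintype A] {M : POMDP L A O} {T : Set L}
    {α : Strategy L A} {l : L} {ε : ℝ≥0∞} (hε : ε < 1) {N : ℕ}
    (h : ∀ k m, M.prefixProb (α l) l (k + m * N)
      (fun t => ∀ s ∈ (statesOf l t).drop k, s ∈ T) ≤ ε ^ m) :
    M.buchiProb α l Tᶜ = 1 := by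
  have hinf : ⨅ m : ℕ, ε ^ m = 0 := le_zero_iff.1 <|
    ge_of_tendsto' (ENNReal.tendsto_pow_atTop_nhds_zero_of_lt_one hε) fun m => iInf_le _ m
  refine le_antisymm (iInf_le_of_le 0 (iSup_le fun n => ?_)) (le_iInf fun k => ?_)
  · rw [horizonProb_eq_prefixProb]
    exact prefixProb_le_one
  calc (1 : ℝ≥0∞) = ⨆ m : ℕ, 1 - ε ^ m := by rw [← ENNReal.sub_iInf, hinf, tsub_zero]
    _ ≤ _ := iSup_le fun m => le_iSup_of_le (k + m * N) ?_
  rw [horizonProb_eq_prefixProb, tsub_le_iff_right]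
  refine (prefixProb_add_prefixProb_not _).symm.le.trans (add_le_add_right
    ((prefixProb_mono fun t ht s hs => ?_).trans (h k m)) _)
  obtain ⟨j, hj, rfl⟩ := List.mem_drop_iff_getElem.1 hs
  by_contra hT
  exact ht ⟨k + j, by omega, by omega, hT⟩

open Classical in
noncomputable def restrictObs (M : POMDP L A O) (S : Finset L) (o : O) : Finset L :=
  S.filter fun y => M.obs y = o

theorem mem_restrictObs {M : POMDP L A O} {S : Finset L} {o : O} {y : L} :
    y ∈ M.restrictObs S o ↔ y ∈ S ∧ M.obs y = o := by
  simp [restrictObs]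

section Belief

variable [Fintype L] (M : POMDP L A O) (T : Set L)

open Classical in
noncomputable def succSet (S : Finset L) (a : A) : Finset L :=
  univ.filter fun y => ∃ x ∈ S, M.δ x a y ≠ 0

noncomputable def post (S : Finset L) (a : A) (o : O) : Finset L :=
  M.restrictObs (M.succSet S a) o

/-- In the perfect-information game whose positions are beliefs, the controller can keep the
belief inside `T` for `n` steps from `S`, whatever observations occur. -/
def BeliefSafe : ℕ → Finset L → Prop
  | 0, S => ∀ x ∈ S, x ∈ T
  | n + 1, S => (∀ x ∈ S, x ∈ T) ∧ ∃ a, ∀ o, BeliefSafe n (M.post S a o)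

def BeliefWinning (S : Finset L) : Prop := ∀ n, M.BeliefSafe T n S

variable {M T} {S : Finset L}

theorem obs_eq_of_mem_post {a : A} {o : O} {y y' : L} (hy : y ∈ M.post S a o)
    (hy' : y' ∈ M.post S a o) : M.obs y = M.obs y' :=
  (mem_restrictObs.1 hy).2.trans (mem_restrictObs.1 hy').2.symm

theorem post_empty (a : A) (o : O) : M.post ∅ a o = ∅ := by
  ext y
  simp [post, restrictObs, succSet]

theorem beliefSafe_empty [Nonempty A] : ∀ n, M.BeliefSafe T n ∅
  | 0 => by simp [BeliefSafe]
  | n + 1 => ⟨by simp, Classical.arbitrary A, fun o => by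
    rw [post_empty]
    exact beliefSafe_empty n⟩

theorem BeliefSafe.of_succ : ∀ {n S}, M.BeliefSafe T (n + 1) S → M.BeliefSafe T n S
  | 0, _, h => h.1
  | _ + 1, _, ⟨hS, a, ha⟩ => ⟨hS, a, fun o => (ha o).of_succ⟩

theorem beliefSafe_antitone (S : Finset L) : Antitone fun n => M.BeliefSafe T n S :=
  antitone_nat_of_succ_le fun _ => BeliefSafe.of_succ

theorem not_beliefWinning_iff :
    ¬ M.BeliefWinning T S ↔ ∀ᶠ n in atTop, ¬ M.BeliefSafe T n S := by
  simp only [BeliefWinning, not_forall, eventually_atTop]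
  exact ⟨fun ⟨n, hn⟩ => ⟨n, fun _ hm h => hn (beliefSafe_antitone S hm h)⟩,
    fun ⟨n, hn⟩ => ⟨n, hn n le_rfl⟩⟩

theorem BeliefWinning.exists_action [Finite A] (hW : M.BeliefWinning T S) :
    ∃ a, ∀ o, M.BeliefWinning T (M.post S a o) := by
  by_contra! h
  have hlose : ∀ᶠ n in atTop, ∀ a, ∃ o, ¬ M.BeliefSafe T n (M.post S a o) :=
    eventually_all.2 fun a =>
      let ⟨o, ho⟩ := h a
      (not_beliefWinning_iff.1 ho).mono fun _ hn => ⟨o, hn⟩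
  obtain ⟨n, hn⟩ := hlose.exists
  obtain ⟨-, a, ha⟩ := hW (n + 1)
  obtain ⟨o, ho⟩ := hn a
  exact ho (ha o)

end Belief

section Losing

variable [Fintype L] [Fintype A] {M : POMDP L A O} {T : Set L}

variable (M) in
open Classical in
noncomputable def minTransProb : ℝ≥0∞ :=
  (univ.filter fun t : L × A × L => M.δ t.1 t.2.1 t.2.2 ≠ 0).inf fun t => M.δ t.1 t.2.1 t.2.2

theorem minTransProb_pos : 0 < M.minTransProb := by
  rw [minTransProb, Finset.lt_inf_iff ENNReal.zero_lt_top]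
  exact fun t ht => pos_iff_ne_zero.2 (mem_filter.1 ht).2

open Classical in
theorem minTransProb_le {x : L} {a : A} {y : L} (h : M.δ x a y ≠ 0) :
    M.minTransProb ≤ M.δ x a y :=
  Finset.inf_le (f := fun t : L × A × L => M.δ t.1 t.2.1 t.2.2) (b := (x, a, y))
    (mem_filter.2 ⟨mem_univ _, h⟩)

theorem minTransProb_le_one [Nonempty L] [Nonempty A] : M.minTransProb ≤ 1 := by
  obtain ⟨y, hy⟩ := (M.δ (Classical.arbitrary L) (Classical.arbitrary A)).support_nonempty
  exact (minTransProb_le ((PMF.mem_support_iff _ _).1 hy)).trans (PMF.coe_le_one _ _)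

theorem minTransProb_le_sum_δ {S : Finset L} {a : A} {o : O} {y : L} (hy : y ∈ M.post S a o) :
    M.minTransProb ≤ ∑ x ∈ S, M.δ x a y := by
  classical
  obtain ⟨x, hxS, hx⟩ := (mem_filter.1 (mem_restrictObs.1 hy).1).2
  exact (minTransProb_le hx).trans
    (single_le_sum (f := fun x => M.δ x a y) (fun _ _ => zero_le) hxS)

variable {π : List (A × L) → PMF A} {n : ℕ} {S : Finset L}

theorem sum_leaveProb_succ (hS : ∀ x ∈ S, x ∈ T) :
    ∑ x ∈ S, M.leaveProb T π x (n + 1) =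
      ∑ a, π [] a *
        ∑ y, (∑ x ∈ S, M.δ x a y) * M.leaveProb T (fun t => π ((a, y) :: t)) y n := by
  rw [sum_congr rfl fun x hx => leaveProb_succ_of_mem (hS x hx), sum_comm]
  refine sum_congr rfl fun a _ => ?_
  rw [sum_comm, mul_sum]
  refine sum_congr rfl fun y _ => ?_
  rw [← sum_mul, ← mul_sum, mul_assoc]

/-- Observation-invariance lets the continuations after all states of one belief be replaced
by a single one, to which the induction hypothesis applies. -/
theorem mul_sum_leaveProb_post_le (hπ : M.ObsInvariant π) {a : A} {o : O} {y₀ : L}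
    (hy₀ : y₀ ∈ M.post S a o) :
    M.minTransProb * ∑ y ∈ M.post S a o, M.leaveProb T (fun t => π ((a, y₀) :: t)) y n ≤
      ∑ y, (∑ x ∈ S, M.δ x a y) * M.leaveProb T (fun t => π ((a, y) :: t)) y n := by
  rw [mul_sum]
  refine (sum_le_sum fun y hy => ?_).trans (sum_le_sum_of_subset (subset_univ _))
  rw [hπ.cons_eq_cons a (obs_eq_of_mem_post hy₀ hy)]
  exact mul_le_mul_left (minTransProb_le_sum_δ hy) _

theorem pow_minTransProb_le_sum_leaveProb_of_notMem [Nonempty L] [Nonempty A] {x : L}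
    (hxS : x ∈ S) (hxT : x ∉ T) : M.minTransProb ^ n ≤ ∑ x ∈ S, M.leaveProb T π x n :=
  calc M.minTransProb ^ n ≤ 1 := pow_le_one₀ zero_le minTransProb_le_one
    _ = M.leaveProb T π x n := (leaveProb_of_notMem hxT).symm
    _ ≤ _ := single_le_sum (f := fun x => M.leaveProb T π x n) (fun _ _ => zero_le) hxS

theorem pow_minTransProb_le_sum_leaveProb [Nonempty L] [Nonempty A] (n : ℕ) :
    ∀ {S : Finset L} {π}, M.ObsInvariant π → ¬ M.BeliefSafe T n S →
      M.minTransProb ^ n ≤ ∑ x ∈ S, M.leaveProb T π x n := by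
  induction n with
  | zero =>
    intro S π _ hS
    obtain ⟨x, hxS, hxT⟩ := not_forall₂.1 hS
    exact pow_minTransProb_le_sum_leaveProb_of_notMem hxS hxT
  | succ n ih =>
    intro S π hπ hS
    by_cases hST : ∀ x ∈ S, x ∈ T
    swap
    · obtain ⟨x, hxS, hxT⟩ := not_forall₂.1 hST
      exact pow_minTransProb_le_sum_leaveProb_of_notMem hxS hxT
    have hbad : ∀ a, ∃ o, ¬ M.BeliefSafe T n (M.post S a o) := by
      simp only [BeliefSafe, not_and, not_exists, not_forall] at hS
      exact hS hST
    choose o ho using hbad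
    have hne : ∀ a, (M.post S a (o a)).Nonempty := fun a =>
      nonempty_iff_ne_empty.2 fun h => ho a (h ▸ beliefSafe_empty n)
    choose y₀ hy₀ using hne
    rw [sum_leaveProb_succ hST]
    calc M.minTransProb ^ (n + 1) = ∑ a, π [] a * (M.minTransProb * M.minTransProb ^ n) := by
          rw [← sum_mul, PMF.sum_coe_eq_one, one_mul, pow_succ']
      _ ≤ ∑ a, π [] a * (M.minTransProb *
            ∑ y ∈ M.post S a (o a), M.leaveProb T (fun t => π ((a, y₀ a) :: t)) y n) := by
          gcongr with a
          exact ih (hπ.cons _) (ho a)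
      _ ≤ _ := by
          gcongr with a
          exact mul_sum_leaveProb_post_le hπ (hy₀ a)

theorem stayProb_le_of_not_beliefSafe [Nonempty L] [Nonempty A] {x : L}
    (hπ : M.ObsInvariant π) (h : ¬ M.BeliefSafe T n {x}) :
    M.stayProb T π x n ≤ 1 - M.minTransProb ^ n := by
  have hleave := pow_minTransProb_le_sum_leaveProb n hπ h
  rw [sum_singleton] at hleave
  refine ENNReal.le_sub_of_add_le_right
    (ne_top_of_le_ne_top ENNReal.one_ne_top (pow_le_one₀ zero_le minTransProb_le_one)) ?_
  calc M.stayProb T π x n + M.minTransProb ^ n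
      ≤ M.stayProb T π x n + M.leaveProb T π x n := by gcongr
    _ = 1 := stayProb_add_leaveProb

end Losing

theorem memRun_congr (M : POMDP L A O) {Mem : Type} (u : Mem → O → A → Mem) :
    ∀ {h h' : List (A × L)} (m : Mem) {x x' : L}, M.obs x = M.obs x' →
      h.map Prod.fst = h'.map Prod.fst →
      h.map (fun p => M.obs p.2) = h'.map (fun p => M.obs p.2) →
      (M.memRun u m x h).1 = (M.memRun u m x' h').1 ∧
        M.obs (M.memRun u m x h).2 = M.obs (M.memRun u m x' h').2
  | [], [], _, _, _, hx, _, _ => ⟨rfl, hx⟩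
  | [], _ :: _, _, _, _, _, h₁, _ => by simp at h₁
  | _ :: _, [], _, _, _, _, h₁, _ => by simp at h₁
  | (a, _) :: _, (a', _) :: _, m, x, x', hx, h₁, h₂ => by
    simp only [List.map_cons, List.cons.injEq] at h₁ h₂
    obtain ⟨rfl, h₁⟩ := h₁
    simp only [memRun, hx]
    exact memRun_congr M u _ h₂.1 h₁ h₂.2

theorem fmStrategy_observationBased (M : POMDP L A O) {Mem : Type} (u : Mem → O → A → Mem)
    (next : Mem → O → PMF A) (m₀ : Mem) : M.ObservationBased (M.fmStrategy u next m₀) := by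
  intro x x' h h' hx h₁ h₂
  obtain ⟨hm, ho⟩ := memRun_congr M u m₀ hx h₁ h₂
  simp only [fmStrategy, hm, ho]

section BeliefStrategy

variable [Fintype L] [Fintype A] [Nonempty A] (M : POMDP L A O) (T : Set L)

noncomputable def winningAction (S : Finset L) : A :=
  Classical.epsilon fun a => ∀ o, M.BeliefWinning T (M.post S a o)

/-- The finite-memory strategy playing winning actions of the belief game; its memory is the
belief before the current observation is taken into account. -/
noncomputable def beliefStrategy (S₀ : Finset L) : Strategy L A :=
  M.fmStrategy (fun S o a => M.succSet (M.restrictObs S o) a)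
    (fun S o => PMF.pure (M.winningAction T (M.restrictObs S o))) S₀

variable {M T}

theorem BeliefWinning.post_winningAction {S : Finset L} (hW : M.BeliefWinning T S) (o : O) :
    M.BeliefWinning T (M.post S (M.winningAction T S) o) :=
  Classical.epsilon_spec (p := fun a => ∀ o, M.BeliefWinning T (M.post S a o)) hW.exists_action o

theorem forall_mem_statesOf_of_prefProbAux_ne_zero :
    ∀ (h : List (A × L)) {S : Finset L} {y : L}, y ∈ S →
      M.BeliefWinning T (M.restrictObs S (M.obs y)) →
      M.prefProbAux (M.beliefStrategy T S y) y h ≠ 0 → ∀ s ∈ statesOf y h, s ∈ T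
  | [], _, y, hy, hW, _ => by
    simpa [statesOf] using hW 0 y (mem_restrictObs.2 ⟨hy, rfl⟩)
  | (a, y') :: t, S, y, hy, hW, hne => by
    rw [prefProbAux, mul_ne_zero_iff, mul_ne_zero_iff] at hne
    obtain ⟨⟨ha, hδ⟩, hrest⟩ := hne
    obtain rfl : a = M.winningAction T (M.restrictObs S (M.obs y)) :=
      (PMF.mem_support_pure_iff _ _).1 ((PMF.mem_support_iff _ _).2 ha)
    rw [statesOf_cons, List.forall_mem_cons]
    refine ⟨hW 0 y (mem_restrictObs.2 ⟨hy, rfl⟩), ?_⟩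
    exact forall_mem_statesOf_of_prefProbAux_ne_zero t
      (mem_filter.2 ⟨mem_univ _, y, mem_restrictObs.2 ⟨hy, rfl⟩, hδ⟩)
      (hW.post_winningAction (M.obs y')) hrest

theorem BeliefWinning.exists_safeProb_eq_one {x : L} (hW : M.BeliefWinning T {x}) :
    ∃ β : Strategy L A, M.ObservationBased β ∧ M.safeProb β x T = 1 := by
  refine ⟨M.beliefStrategy T {x}, fmStrategy_observationBased _ _ _ _, ?_⟩
  have hx : M.restrictObs {x} (M.obs x) = {x} := by
    ext
    simp only [mem_restrictObs, mem_singleton, and_iff_left_iff_imp]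
    rintro rfl
    rfl
  have hsafe : ∀ n, M.horizonProb (M.beliefStrategy T {x}) x n
      (fun h => ∀ s ∈ statesOf x h, s ∈ T) = 1 := fun n => by
    rw [horizonProb_eq_prefixProb]
    exact prefixProb_eq_one fun t =>
      forall_mem_statesOf_of_prefProbAux_ne_zero t (mem_singleton_self x) (by rwa [hx])
  simp only [safeProb, hsafe, iInf_const]

end BeliefStrategy

end POMDP

/-- If no state `l'` reachable from `l` in the underlying graph
admits an observation-based strategy that is almost-sure winning for `Safe(T)`
from `l'`, then for every observation-based strategy `α`,
`Pr_l^α(Büchi(L ∖ T)) = 1`: with probability 1 the play visits states outside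
`T` infinitely often. -/
theorem buchi_complement_almost_sure_of_no_almost_safe {L A O : Type}
    [Fintype L] [Fintype A] (M : POMDP L A O) (T : Set L) (l : L)
    (hno : ∀ l' : L, M.ReachableFrom l l' →
      ¬ ∃ α : POMDP.Strategy L A, M.ObservationBased α ∧ M.safeProb α l' T = 1) :
    ∀ α : POMDP.Strategy L A, M.ObservationBased α → M.buchiProb α l Tᶜ = 1 := by
  intro α hα
  have : Nonempty L := ⟨l⟩
  have : Nonempty A := ⟨(α l []).support_nonempty.some⟩
  have hlose : ∀ᶠ N in atTop, ∀ x, M.ReachableFrom l x → ¬ M.BeliefSafe T N {x} :=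
    eventually_all.2 fun x => eventually_imp_distrib_left.2 fun hx =>
      POMDP.not_beliefWinning_iff.1 fun hW : M.BeliefWinning T {x} =>
        hno x hx hW.exists_safeProb_eq_one
  obtain ⟨N, hN⟩ := hlose.exists
  have hstay : ∀ π x, M.ObsInvariant π → M.ReachableFrom l x →
      M.stayProb T π x N ≤ 1 - M.minTransProb ^ N := fun π x hπ hx =>
    POMDP.stayProb_le_of_not_beliefSafe hπ (hN x hx)
  have hε : 1 - M.minTransProb ^ N < 1 :=
    ENNReal.sub_lt_self ENNReal.one_ne_top one_ne_zero (pow_ne_zero N POMDP.minTransProb_pos.ne')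
  refine POMDP.buchiProb_compl_eq_one hε (N := N) fun k m => ?_
  exact POMDP.prefixProb_forall_mem_drop_le (M.closed_reachableFrom l)
    (fun π x hπ hx => POMDP.stayProb_mul_le_pow (M.closed_reachableFrom l) hstay m hπ hx) k
    (hα.obsInvariant l) Relation.ReflTransGen.refl
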